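/- arXiv:2309.01231 — 2 statements merged into one kernel-verified Lean document; each statement's English description precedes it below -/
import Mathlib

section
/- In the game saliquant, if p is a prime with p ≡ 5 (mod 6), then SG(2p) = (p − 1)/2. -/
/-- Sprague–Grundy values for the game saliquant: the options of a position `n`
are the positions `n - k` where `1 ≤ k ≤ n` and `k` does not divide `n`, and
`sg n` is the least nonnegative integer not among the values of the options. -/
noncomputable def sg : ℕ → ℕ
  | n => sInf {m : ℕ | ∀ k, 1 ≤ k → k ≤ n → ¬ k ∣ n → sg (n - k) ≠ m}
decreasing_by omega

def sgSet (n : ℕ) : Set ℕ := {m : ℕ | ∀ k, 1 ≤ k → k ≤ n → ¬ k ∣ n → sg (n - k) ≠ m}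

lemma sg_eq (n : ℕ) : sg n = sInf (sgSet n) := by rw [sg]; rfl

lemma odd_dvd_two_mul {k n : ℕ} (hk : k % 2 = 1) (hd : k ∣ 2 * n) : k ∣ n := by
  have hg := Nat.gcd_dvd_right k 2
  have hgk := Nat.gcd_dvd_left k 2
  have hcop : Nat.gcd k 2 = 1 := by
    rcases (Nat.dvd_prime Nat.prime_two).mp hg with hh | hh
    · exact hh
    · exfalso; rw [hh] at hgk; omega
  exact Nat.Coprime.dvd_of_dvd_mul_left hcop hd

lemma sg_key : ∀ N : ℕ,
    (∀ m, N = 2 * m + 1 → sg N = m) ∧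
    (∀ n, 1 ≤ n → N = 2 * n →
      ∃ i, sg N + i + 1 = n ∧ (2 * i + 1) ∣ n ∧ (3 ∣ n → 1 ≤ i)) := by
  intro N
  induction N using Nat.strong_induction_on with
  | _ N IH =>
  have hodd : ∀ m, 2 * m + 1 < N → sg (2 * m + 1) = m :=
    fun m h => (IH _ h).1 m rfl
  have heven : ∀ n, 1 ≤ n → 2 * n < N →
      ∃ i, sg (2 * n) + i + 1 = n ∧ (2 * i + 1) ∣ n ∧ (3 ∣ n → 1 ≤ i) :=
    fun n h1 h2 => (IH _ h2).2 n h1 rfl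
  have hevenle : ∀ n, 1 ≤ n → 2 * n < N → sg (2 * n) + 1 ≤ n := by
    intro n h1 h2
    obtain ⟨i, hi, -, -⟩ := heven n h1 h2
    omega
  constructor
  · -- odd case
    intro m hm
    subst hm
    have hmem : m ∈ sgSet (2 * m + 1) := by
      intro k hk1 hk2 hknd
      have hkne : k ≠ 2 * m + 1 := fun hh => hknd (hh ▸ dvd_refl _)
      rcases Nat.even_or_odd k with he | ho
      · obtain ⟨j, rfl⟩ := he
        have heq : 2 * m + 1 - (j + j) = 2 * (m - j) + 1 := by omega
        rw [heq, hodd (m - j) (by omega)]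
        omega
      · obtain ⟨j, rfl⟩ := ho
        have hjm : j < m := by
          have : j ≤ m := by omega
          rcases eq_or_lt_of_le this with hh | hh
          · exact absurd (by omega : 2 * j + 1 = 2 * m + 1) hkne
          · exact hh
        have heq : 2 * m + 1 - (2 * j + 1) = 2 * (m - j) := by omega
        rw [heq]
        have := hevenle (m - j) (by omega) (by omega)
        omega
    have hnot : ∀ w, w < m → w ∉ sgSet (2 * m + 1) := by
      intro w hw hmemw
      have h1 : ¬ (2 * (m - w)) ∣ (2 * m + 1) := by
        intro hdvd
        have h2 : (2 : ℕ) ∣ 2 * m + 1 := dvd_trans ⟨m - w, rfl⟩ hdvd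
        omega
      have h2 := hmemw (2 * (m - w)) (by omega) (by omega) h1
      have heq : 2 * m + 1 - 2 * (m - w) = 2 * w + 1 := by omega
      rw [heq, hodd w (by omega)] at h2
      exact h2 rfl
    rw [sg_eq]
    have hle := Nat.sInf_le hmem
    have hin := Nat.sInf_mem ⟨m, hmem⟩
    rcases eq_or_lt_of_le hle with hh | hh
    · exact hh
    · exact absurd hin (hnot _ hh)
  · -- even case
    intro n hn1 hN
    subst hN
    rcases eq_or_lt_of_le hn1 with h1 | hn2
    · -- n = 1
      have h1' : n = 1 := h1.symm
      subst h1'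
      have h0 : (0 : ℕ) ∈ sgSet 2 := by
        intro k hk1 hk2 hknd
        interval_cases k
        · exact absurd (one_dvd 2) hknd
        · exact absurd dvd_rfl hknd
      have : sg (2 * 1) ≤ 0 := by
        rw [sg_eq]
        exact Nat.sInf_le (by simpa using h0)
      exact ⟨0, by omega, one_dvd 1, by omega⟩
    · -- n ≥ 2
      have hub : ∀ k, 1 ≤ k → k ≤ 2 * n → ¬ k ∣ 2 * n →
          sg (2 * n - k) + 2 ≤ n ∧ (k ≠ 3 → sg (2 * n - k) + 3 ≤ n) := by
        intro k hk1 hk2 hknd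
        have hkne : k ≠ 2 * n := fun hh => hknd (hh ▸ dvd_refl _)
        rcases Nat.even_or_odd k with he | ho
        · obtain ⟨j, rfl⟩ := he
          have hj2 : 2 ≤ j := by
            by_contra hh
            have hj1 : j = 1 := by omega
            exact hknd (by rw [hj1]; exact ⟨n, by ring⟩)
          have heq : 2 * n - (j + j) = 2 * (n - j) := by omega
          rw [heq]
          have := hevenle (n - j) (by omega) (by omega)
          constructor <;> omega
        · obtain ⟨j, rfl⟩ := ho
          have hj1 : 1 ≤ j := by
            by_contra hh
            have h11 : 2 * j + 1 = 1 := by omega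
            exact hknd (by rw [h11]; exact one_dvd _)
          have heq : 2 * n - (2 * j + 1) = 2 * (n - j - 1) + 1 := by omega
          rw [heq, hodd (n - j - 1) (by omega)]
          constructor <;> omega
      have hSmem : ∀ x, n - 1 ≤ x → x ∈ sgSet (2 * n) := by
        intro x hx k h1 h2 h3
        have := (hub k h1 h2 h3).1
        omega
      have hne : (sgSet (2 * n)).Nonempty := ⟨n - 1, hSmem _ le_rfl⟩
      have hvin : sg (2 * n) ∈ sgSet (2 * n) := by rw [sg_eq]; exact Nat.sInf_mem hne
      have hvle : sg (2 * n) ≤ n - 1 := by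
        rw [sg_eq]; exact Nat.sInf_le (hSmem _ le_rfl)
      refine ⟨n - 1 - sg (2 * n), by omega, ?_, ?_⟩
      · by_contra hnd
        have hi1 : 1 ≤ n - 1 - sg (2 * n) := by
          by_contra hh
          have : n - 1 - sg (2 * n) = 0 := by omega
          rw [this] at hnd
          exact hnd (by simpa using one_dvd n)
        set i := n - 1 - sg (2 * n) with hidef
        have hknd : ¬ (2 * i + 1) ∣ 2 * n := fun hh =>
          hnd (odd_dvd_two_mul (by omega) hh)
        have hc := hvin (2 * i + 1) (by omega) (by omega) hknd
        have heq : 2 * n - (2 * i + 1) = 2 * (n - i - 1) + 1 := by omega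
        rw [heq, hodd (n - i - 1) (by omega)] at hc
        exact hc (by omega)
      · intro h3
        have hn3 : 3 ≤ n := by
          obtain ⟨c, hc⟩ := h3; omega
        have hmem2 : (n - 2) ∈ sgSet (2 * n) := by
          intro k h1 h2 hknd
          have hk3 : k ≠ 3 := by
            rintro rfl
            exact hknd (Dvd.dvd.mul_left h3 2)
          have := (hub k h1 h2 hknd).2 hk3
          omega
        have hle2 : sg (2 * n) ≤ n - 2 := by
          rw [sg_eq]; exact Nat.sInf_le hmem2
        omega

lemma sg_odd (m : ℕ) : sg (2 * m + 1) = m := (sg_key _).1 m rfl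

theorem saliquant_prime_five_mod_six (p : ℕ) (hp : p.Prime) (h : p % 6 = 5) :
    sg (2 * p) = (p - 1) / 2 := by
  have hp5 : 5 ≤ p := by omega
  obtain ⟨i, hi, hdvd, -⟩ := (sg_key (2 * p)).2 p (by omega) rfl
  have hcases := hp.eq_one_or_self_of_dvd _ hdvd
  have hmem : (p - 1) / 2 ∈ sgSet (2 * p) := by
    intro k hk1 hk2 hknd
    rcases Nat.even_or_odd k with he | ho
    · obtain ⟨j, rfl⟩ := he
      have hjnd : ¬ j ∣ p := by
        intro hd
        exact hknd (by rw [← two_mul]; exact mul_dvd_mul_left 2 hd)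
      have hj2 : 2 ≤ j := by
        by_contra hh
        interval_cases j
        · omega
        · exact hjnd (one_dvd p)
      have hjp : j ≤ p - 1 := by
        have : j ≠ p := fun hh => hjnd (hh ▸ dvd_refl p)
        omega
      have heq : 2 * p - (j + j) = 2 * (p - j) := by omega
      rw [heq]
      obtain ⟨i', hi', hdvd', h3'⟩ := (sg_key (2 * (p - j))).2 (p - j) (by omega) rfl
      intro hcon
      have h2m : 2 * (p - j) = p + (2 * i' + 1) := by omega
      have ht2 : (2 * i' + 1) ∣ 2 * (p - j) := Dvd.dvd.mul_left hdvd' 2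
      have htp : (2 * i' + 1) ∣ p := by
        have hsub := Nat.dvd_sub ht2 (dvd_refl (2 * i' + 1))
        rwa [show 2 * (p - j) - (2 * i' + 1) = p by omega] at hsub
      rcases hp.eq_one_or_self_of_dvd _ htp with h1' | h1'
      · have hm3 : 3 ∣ (p - j) := by omega
        have := h3' hm3
        omega
      · omega
    · obtain ⟨j, rfl⟩ := ho
      have hj1 : 1 ≤ j := by
        by_contra hh
        have h11 : 2 * j + 1 = 1 := by omega
        exact hknd (by rw [h11]; exact one_dvd _)
      have hkne : 2 * j + 1 ≠ p := by
        intro hh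
        exact hknd (by rw [hh]; exact ⟨2, by ring⟩)
      have hkne2 : 2 * j + 1 ≠ 2 * p := by omega
      have heq : 2 * p - (2 * j + 1) = 2 * (p - j - 1) + 1 := by omega
      rw [heq, sg_odd]
      omega
  have hle : sg (2 * p) ≤ (p - 1) / 2 := by
    rw [sg_eq]; exact Nat.sInf_le hmem
  rcases hcases with h1 | h1 <;> omega
end

section
/- In the game saliquant, for every b ≥ 3, SG(2·(2^b − 1)) > 2^(b−1) − 1; moreover, if 2^b − 1 is prime, then SG(2·(2^b − 1)) = 2^b − 2. -/
lemma sg_eq_s13 (n : ℕ) : sg n = sInf {m : ℕ | ∀ k, 1 ≤ k → k ≤ n → ¬ k ∣ n → sg (n - k) ≠ m} := by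
  rw [sg]

lemma sg_le {n v : ℕ} (h : ∀ k, 1 ≤ k → k ≤ n → ¬ k ∣ n → sg (n - k) ≠ v) : sg n ≤ v := by
  rw [sg_eq_s13]; exact Nat.sInf_le h

lemma sg_mem (n : ℕ) : ∀ k, 1 ≤ k → k ≤ n → ¬ k ∣ n → sg (n - k) ≠ sg n := by
  have hne : {m : ℕ | ∀ k, 1 ≤ k → k ≤ n → ¬ k ∣ n → sg (n - k) ≠ m}.Nonempty := by
    obtain ⟨m, hm⟩ := Finset.exists_notMem ((Finset.range (n+1)).image (fun k => sg (n - k)))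
    exact ⟨m, fun k _ hk2 _ hv => hm (Finset.mem_image.2 ⟨k, Finset.mem_range.2 (by omega), hv⟩)⟩
  have := Nat.sInf_mem hne
  rw [← sg_eq_s13] at this
  exact this

lemma sg_main : ∀ n : ℕ, (n % 2 = 1 → sg n = (n - 1) / 2) ∧ (n % 2 = 0 → n ≠ 0 → sg n < n / 2) := by
  intro n
  induction n using Nat.strong_induction_on with
  | _ n ih =>
  constructor
  · -- odd case
    intro hodd
    have hle : sg n ≤ (n - 1) / 2 := by
      apply sg_le
      intro k hk1 hkn hknd
      rcases Nat.mod_two_eq_zero_or_one (n - k) with hm | hm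
      · -- option even
        have hm0 : n - k ≠ 0 := by
          intro h0; apply hknd; have hkn' : k = n := by omega
          rw [hkn']
        have := (ih (n - k) (by omega)).2 hm hm0
        omega
      · -- option odd
        have := (ih (n - k) (by omega)).1 hm
        omega
    have hge : ¬ sg n < (n - 1) / 2 := by
      intro hlt
      set u := sg n with hu
      have hmlt : 2 * u + 1 < n := by omega
      have hk1 : 1 ≤ n - (2 * u + 1) := by omega
      have hknd : ¬ (n - (2 * u + 1)) ∣ n := by
        intro hd
        have h2 : 2 ∣ (n - (2 * u + 1)) := ⟨(n - (2 * u + 1)) / 2, by omega⟩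
        have := h2.trans hd
        omega
      have := sg_mem n (n - (2 * u + 1)) hk1 (by omega) hknd
      have heq : n - (n - (2 * u + 1)) = 2 * u + 1 := by omega
      rw [heq] at this
      have := (ih (2 * u + 1) (by omega)).1 (by omega)
      omega
    omega
  · -- even case
    intro heven hne
    have hle : sg n ≤ n / 2 - 1 := by
      apply sg_le
      intro k hk1 hkn hknd
      have hk1' : k ≠ 1 := fun h => hknd (h ▸ one_dvd n)
      rcases Nat.mod_two_eq_zero_or_one (n - k) with hm | hm
      · -- option even, so k even, k ≠ 2, k ≠ n
        have hk2 : k ≠ 2 := fun h => hknd (h ▸ ⟨n / 2, by omega⟩)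
        have hkne : k ≠ n := fun h => hknd (h ▸ dvd_refl n)
        have hm0 : n - k ≠ 0 := by omega
        have := (ih (n - k) (by omega)).2 hm hm0
        omega
      · -- option odd, k ≥ 2 so m ≤ n - 3
        have := (ih (n - k) (by omega)).1 hm
        omega
    omega

lemma sg_odd_s13 {n : ℕ} (h : n % 2 = 1) : sg n = (n - 1) / 2 := (sg_main n).1 h

lemma sg_even {n : ℕ} (h : n % 2 = 0) (h0 : n ≠ 0) : sg n < n / 2 := (sg_main n).2 h h0

lemma sg_pow {a : ℕ} (ha : 1 ≤ a) : sg (2 ^ a) = 2 ^ (a - 1) - 1 := by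
  have h2 : 2 ^ a = 2 * 2 ^ (a - 1) := by
    conv_lhs => rw [show a = (a - 1) + 1 by omega, pow_succ, mul_comm]
  have hp1 : 1 ≤ 2 ^ (a - 1) := Nat.one_le_two_pow
  have hle : sg (2 ^ a) ≤ 2 ^ (a - 1) - 1 := by
    have := sg_even (n := 2 ^ a) (by omega) (by omega)
    omega
  rcases Nat.lt_or_ge (sg (2 ^ a)) (2 ^ (a - 1) - 1) with hlt | hge
  · exfalso
    set u := sg (2 ^ a) with hu
    set k := 2 ^ a - (2 * u + 1) with hk
    have hkodd : k % 2 = 1 := by omega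
    have hk3 : 3 ≤ k := by omega
    have hknd : ¬ k ∣ 2 ^ a := by
      intro hd
      obtain ⟨i, hi, hki⟩ := (Nat.dvd_prime_pow Nat.prime_two).mp hd
      rcases Nat.eq_zero_or_pos i with h0 | h0
      · simp [h0] at hki; omega
      · have : 2 ∣ 2 ^ i := dvd_pow_self 2 (by omega)
        omega
    have := sg_mem (2 ^ a) k (by omega) (by omega) hknd
    have heq : 2 ^ a - k = 2 * u + 1 := by omega
    rw [heq] at this
    have := sg_odd_s13 (n := 2 * u + 1) (by omega)
    omega
  · omega

theorem saliquant_twice_mersenne (b : ℕ) (hb : 3 ≤ b) :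
    2 ^ (b - 1) - 1 < sg (2 * (2 ^ b - 1)) ∧
    ((2 ^ b - 1).Prime → sg (2 * (2 ^ b - 1)) = 2 ^ b - 2) := by
  have hB : 2 ^ b = 2 * 2 ^ (b - 1) := by
    conv_lhs => rw [show b = (b - 1) + 1 by omega, pow_succ, mul_comm]
  have hB8 : 8 ≤ 2 ^ b := by calc (8:ℕ) = 2 ^ 3 := rfl
                                  _ ≤ 2 ^ b := Nat.pow_le_pow_right (by norm_num) hb
  set B := 2 ^ b with hBdef
  set N := 2 * (B - 1) with hN
  have hNeven : N % 2 = 0 := by omega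
  -- Part 1
  have part1 : 2 ^ (b - 1) - 1 < sg N := by
    by_contra hcon
    push_neg at hcon
    set u := sg N with hu
    rcases Nat.lt_or_ge u (2 ^ (b - 1) - 1) with hlt | hge
    · -- odd option 2u+1, k ≥ B + 1, k odd, can't divide N
      set k := N - (2 * u + 1) with hk
      have hkB : B + 1 ≤ k := by omega
      have hkodd : k % 2 = 1 := by omega
      have hknd : ¬ k ∣ N := by
        intro hd
        have hcop : Nat.Coprime k 2 := by
          rw [Nat.coprime_two_right]; exact Nat.odd_iff.mpr hkodd
        have hdB : k ∣ (B - 1) := hcop.dvd_of_dvd_mul_left hd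
        have := Nat.le_of_dvd (by omega) hdB
        omega
      have := sg_mem N k (by omega) (by omega) hknd
      have heq : N - k = 2 * u + 1 := by omega
      rw [heq] at this
      have := sg_odd_s13 (n := 2 * u + 1) (by omega)
      omega
    · -- u = 2^(b-1) - 1 : option 2^b via k = B - 2
      have hueq : u = 2 ^ (b - 1) - 1 := by omega
      set k := B - 2 with hk
      have hknd : ¬ k ∣ N := by
        rintro ⟨c, hc⟩
        rcases Nat.lt_or_ge c 3 with hc3 | hc3
        · interval_cases c <;> omega
        · have : k * 3 ≤ k * c := Nat.mul_le_mul le_rfl hc3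
          omega
      have := sg_mem N k (by omega) (by omega) hknd
      have heq : N - k = 2 ^ b := by omega
      rw [heq] at this
      have := sg_pow (a := b) (by omega)
      omega
  refine ⟨part1, fun hp => ?_⟩
  -- Part 2
  have hle : sg N ≤ B - 2 := by
    apply sg_le
    intro k hk1 hkn hknd
    have hk1' : k ≠ 1 := fun h => hknd (h ▸ one_dvd N)
    rcases Nat.mod_two_eq_zero_or_one (N - k) with hm | hm
    · -- even option: k even, k ≠ 2, k ≠ N
      have hk2 : k ≠ 2 := fun h => hknd (h ▸ ⟨B - 1, by omega⟩)
      have hkne : k ≠ N := fun h => hknd (h ▸ dvd_refl N)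
      have := sg_even (n := N - k) hm (by omega)
      omega
    · have := sg_odd_s13 (n := N - k) hm
      omega
  rcases Nat.lt_or_ge (sg N) (B - 2) with hlt | hge
  · exfalso
    set u := sg N with hu
    set k := N - (2 * u + 1) with hk
    have hkodd : k % 2 = 1 := by omega
    have hk3 : 3 ≤ k := by omega
    have hkp : k ≤ B - 3 := by omega
    have hknd : ¬ k ∣ N := by
      intro hd
      have hcop : Nat.Coprime k 2 := by
        rw [Nat.coprime_two_right]; exact Nat.odd_iff.mpr hkodd
      have hdB : k ∣ (B - 1) := hcop.dvd_of_dvd_mul_left hd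
      rcases (Nat.Prime.eq_one_or_self_of_dvd hp k hdB) with h | h <;> omega
    have := sg_mem N k (by omega) (by omega) hknd
    have heq : N - k = 2 * u + 1 := by omega
    rw [heq] at this
    have := sg_odd_s13 (n := 2 * u + 1) (by omega)
    omega
  · omega
end
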